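/- Let k'' be a power of 2 with k'' > 4 and let r ≥ 2. With F as in the recursive definition (F(k')=1 for k'≤4; F(k')=2^16 r^3 log r · F(k'/2) for powers of two k'>4; F(k')=F(next power of two) otherwise), suppose a set S' with |out(S')| = k' ≤ ⌈k/2⌉ and |S'| > 128·F(k') is partitioned into clusters {Z} with Σ over clusters of size-class i (those with k''/2^i < |out(Z)| ≤ k''/2^{i-1}) having at most 2^{3i+3} members, where k'' is the smallest power of 2 ≥ k'. If each cluster Z is replaced by a set of at most F(|out(Z)|) vertices, the total number of resulting vertices Σ_Z F(|out(Z)|) is strictly less than |S'|. -/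

import Mathlib

/-!
Every value of `F` is a power of `C = 2^16 r^3 log₂ r`, namely `F n = C^(⌈log₂ n⌉ - 2)`.
A cluster of size class `i` thus contributes at most `C^(m-1-i)`, and there are at most
`2^(3i+3)` of them. As `C ≥ 2^19`, the `i`-th class contributes at most `2^-i · 2^7 C^(m-2)`,
and the geometric series keeps the total below `2^7 C^(m-2) = 128 F(k')`.
-/

namespace VS

/-- The recursive specification of the function `F` (for the parameter `r`):
`F(k') = 1` for `k' ≤ 4`; `F(k') = 2^16·r^3·log r·F(k'/2)` when `k' > 4` is a power of
two; and `F(k') = F(k'')` for the smallest power of two `k'' ≥ k'` otherwise. -/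
def FSpec (r : ℕ) (F : ℕ → ℝ) : Prop :=
  (∀ k ≤ 4, F k = 1) ∧
  (∀ m : ℕ, 4 < 2 ^ m → F (2 ^ m) = 2 ^ 16 * (r : ℝ) ^ 3 * Real.logb 2 r * F (2 ^ m / 2)) ∧
  (∀ k : ℕ, 4 < k → (∀ m : ℕ, k ≠ 2 ^ m) → F k = F (2 ^ Nat.clog 2 k))

open Finset

noncomputable def growthFactor (r : ℕ) : ℝ := 2 ^ 16 * (r : ℝ) ^ 3 * Real.logb 2 r

lemma two_pow_nineteen_le_growthFactor {r : ℕ} (hr : 2 ≤ r) :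
    (2 : ℝ) ^ 19 ≤ growthFactor r := by
  have hr' : (2 : ℝ) ≤ r := by exact_mod_cast hr
  have hlog : 1 ≤ Real.logb 2 r := by
    rw [Real.le_logb_iff_rpow_le one_lt_two (by linarith)]
    simpa using hr'
  calc (2 : ℝ) ^ 19 = 2 ^ 16 * 2 ^ 3 * 1 := by norm_num
    _ ≤ growthFactor r := by unfold growthFactor; gcongr

namespace FSpec

variable {r : ℕ} {F : ℕ → ℝ}

lemma apply_two_pow (hF : FSpec r F) (j : ℕ) : F (2 ^ j) = growthFactor r ^ (j - 2) := by
  induction j with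
  | zero => simpa using hF.1 1 (by norm_num)
  | succ j ih =>
    rcases le_or_gt (j + 1) 2 with hj | hj
    · rw [hF.1 _ ((Nat.pow_le_pow_right two_pos hj).trans_eq (by norm_num)),
        Nat.sub_eq_zero_of_le hj, pow_zero]
    · have h4 : 4 < 2 ^ (j + 1) :=
        (by norm_num : 4 < 2 ^ 3).trans_le (Nat.pow_le_pow_right two_pos hj)
      rw [hF.2.1 _ h4, Nat.pow_succ, Nat.mul_div_cancel _ two_pos, ih,
        show j + 1 - 2 = j - 2 + 1 by omega, pow_succ, growthFactor]
      ring

lemma eq_growthFactor_pow_clog (hF : FSpec r F) (n : ℕ) :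
    F n = growthFactor r ^ (Nat.clog 2 n - 2) := by
  rcases le_or_gt n 4 with hn | hn
  · have : Nat.clog 2 n ≤ 2 := Nat.clog_le_of_le_pow (by simpa using hn)
    rw [hF.1 n hn, Nat.sub_eq_zero_of_le this, pow_zero]
  · by_cases hpow : ∃ j, n = 2 ^ j
    · obtain ⟨j, rfl⟩ := hpow
      rw [hF.apply_two_pow, Nat.clog_pow 2 j one_lt_two]
    · push Not at hpow
      rw [hF.2.2 n hn hpow, hF.apply_two_pow]

end FSpec

/-- The paper's size class of a cluster with `n` outgoing edges: the `i` with
`2^m / 2^i < n ≤ 2^m / 2^(i-1)`. -/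
def sizeClass (m n : ℕ) : ℕ := m + 1 - Nat.clog 2 n

lemma sizeClass_mem_Icc {m n : ℕ} (hnm : Nat.clog 2 n ≤ m) :
    sizeClass m n ∈ Icc 1 (m + 1) := by
  rw [mem_Icc, sizeClass]
  omega

lemma FSpec.eq_growthFactor_pow_sizeClass {r : ℕ} {F : ℕ → ℝ} (hF : FSpec r F) {m n : ℕ}
    (hnm : Nat.clog 2 n ≤ m) : F n = growthFactor r ^ (m - 1 - sizeClass m n) := by
  rw [hF.eq_growthFactor_pow_clog, sizeClass]
  congr 1
  omega

lemma two_pow_clog_lt_two_mul {n : ℕ} (hn : 1 ≤ n) : 2 ^ Nat.clog 2 n < 2 * n := by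
  rcases h : Nat.clog 2 n with _ | j
  · omega
  · have := Nat.pow_lt_of_lt_clog (b := 2) (x := n) (y := j) (by omega)
    rw [pow_succ]
    omega

lemma clog_eq_of_le_of_lt {n m : ℕ} (hle : n ≤ 2 ^ m) (hlt : 2 ^ m < 2 * n) :
    Nat.clog 2 n = m := by
  have hle' : Nat.clog 2 n ≤ m := Nat.clog_le_of_le_pow hle
  have : 2 ^ m < 2 ^ (Nat.clog 2 n + 1) := by
    rw [pow_succ]
    linarith [Nat.le_pow_clog one_lt_two n]
  have := (Nat.pow_lt_pow_iff_right (by norm_num)).mp this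
  omega

lemma bounds_of_sizeClass {m n : ℕ} (hn : 1 ≤ n) (hnm : Nat.clog 2 n ≤ m) :
    (2 : ℝ) ^ m / 2 ^ sizeClass m n < n ∧ (n : ℝ) ≤ 2 ^ m / 2 ^ (sizeClass m n - 1) := by
  rw [sizeClass]
  set j := Nat.clog 2 n
  have hlow : (2 : ℝ) ^ m / 2 ^ (m + 1 - j) = 2 ^ j / 2 := by
    rw [div_eq_div_iff (by positivity) (by positivity), ← pow_succ, ← pow_add]
    congr 1
    omega
  have hhigh : (2 : ℝ) ^ m / 2 ^ (m + 1 - j - 1) = 2 ^ j := by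
    rw [div_eq_iff (by positivity), ← pow_add]
    congr 1
    omega
  rw [hlow, hhigh, div_lt_iff₀ two_pos]
  constructor
  · rw [mul_comm]
    exact_mod_cast two_pow_clog_lt_two_mul hn
  · exact_mod_cast Nat.le_pow_clog one_lt_two n

lemma sum_le_sum_card_fiber_mul {ι κ : Type*} [Fintype ι] [DecidableEq κ] (s : Finset κ)
    (c : ι → κ) (hc : ∀ x, c x ∈ s) (f : ι → ℝ) (w b : κ → ℝ)
    (hf : ∀ x, f x ≤ w (c x)) (hw : ∀ i ∈ s, 0 ≤ w i)
    (hcard : ∀ i ∈ s, (#{x | c x = i} : ℝ) ≤ b i) :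
    ∑ x, f x ≤ ∑ i ∈ s, b i * w i := by
  rw [← sum_fiberwise_of_maps_to (fun x _ ↦ hc x) f]
  refine sum_le_sum fun i hi ↦ ?_
  calc ∑ x with c x = i, f x ≤ ∑ x with c x = i, w i :=
        sum_le_sum fun x hx ↦ (mem_filter.mp hx).2 ▸ hf x
    _ = #{x | c x = i} * w i := by rw [sum_const, nsmul_eq_mul]
    _ ≤ b i * w i := mul_le_mul_of_nonneg_right (hcard i hi) (hw i hi)

lemma two_pow_mul_pow_le {C : ℝ} (hC : 2 ^ 19 ≤ C) {m i : ℕ} (hm : 3 ≤ m)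
    (hi : i ∈ Icc 1 (m + 1)) :
    2 ^ (3 * i + 3) * C ^ (m - 1 - i) ≤ (1 / 2) ^ i * (2 ^ 7 * C ^ (m - 2)) := by
  obtain ⟨hi1, him⟩ := mem_Icc.mp hi
  have h16 : (16 : ℝ) ≤ C := le_trans (by norm_num) hC
  have key : 16 ^ (i - 1) * C ^ (m - 1 - i) ≤ C ^ (m - 2) := by
    rcases Nat.lt_or_ge i m with him' | him'
    · rw [show m - 2 = (i - 1) + (m - 1 - i) by omega, pow_add]
      gcongr
    · -- `F` has bottomed out at `1` here, so the paper's halving `T(i) < T(i-1)/2` fails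
      -- and `C ≥ 2^19` has to absorb these last two classes
      rw [Nat.sub_eq_zero_of_le (show m - 1 ≤ i by omega), pow_zero, mul_one]
      calc (16 : ℝ) ^ (i - 1) ≤ (2 ^ 19) ^ (m - 2) := by
            rw [show (16 : ℝ) = 2 ^ 4 by norm_num, ← pow_mul, ← pow_mul]
            exact pow_le_pow_right₀ (by norm_num) (by omega)
        _ ≤ C ^ (m - 2) := by gcongr
  rw [div_pow, one_pow, div_mul_eq_mul_div, le_div_iff₀ (by positivity)]
  calc 2 ^ (3 * i + 3) * C ^ (m - 1 - i) * 2 ^ i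
        = 2 ^ 7 * (16 ^ (i - 1) * C ^ (m - 1 - i)) := by
          obtain ⟨t, rfl⟩ : ∃ t, i = t + 1 := ⟨i - 1, by omega⟩
          rw [Nat.add_sub_cancel, show (16 : ℝ) ^ t = 2 ^ (4 * t) by rw [pow_mul]; norm_num]
          ring
    _ ≤ 1 * (2 ^ 7 * C ^ (m - 2)) := by rw [one_mul]; gcongr

lemma sum_Icc_one_half_pow_lt_one (n : ℕ) : ∑ i ∈ Icc 1 n, (1 / 2 : ℝ) ^ i < 1 := by
  rw [← Ico_add_one_right_eq_Icc, geom_sum_Ico' (by norm_num) (by omega)]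
  have : (0 : ℝ) < (1 / 2) ^ (n + 1) := by positivity
  norm_num
  linarith

/-- The paper's `Σ_i 2^(3i+3) F(k''/2^(i-1)) < 2^7 F(k'')`, with `k'' = 2^m`. -/
lemma sum_two_pow_mul_pow_lt {C : ℝ} (hC : 2 ^ 19 ≤ C) {m : ℕ} (hm : 3 ≤ m) :
    ∑ i ∈ Icc 1 (m + 1), 2 ^ (3 * i + 3) * C ^ (m - 1 - i) < 2 ^ 7 * C ^ (m - 2) := by
  have hpos : (0 : ℝ) < 2 ^ 7 * C ^ (m - 2) := by
    have : (0 : ℝ) < C := lt_of_lt_of_le (by norm_num) hC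
    positivity
  calc ∑ i ∈ Icc 1 (m + 1), 2 ^ (3 * i + 3) * C ^ (m - 1 - i)
      ≤ ∑ i ∈ Icc 1 (m + 1), (1 / 2) ^ i * (2 ^ 7 * C ^ (m - 2)) :=
        sum_le_sum fun i hi ↦ two_pow_mul_pow_le hC hm hi
    _ = (∑ i ∈ Icc 1 (m + 1), (1 / 2 : ℝ) ^ i) * (2 ^ 7 * C ^ (m - 2)) := by rw [sum_mul]
    _ < 1 * (2 ^ 7 * C ^ (m - 2)) :=
        mul_lt_mul_of_pos_right (sum_Icc_one_half_pow_lt_one _) hpos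
    _ = 2 ^ 7 * C ^ (m - 2) := one_mul _

theorem stmt15_general (r : ℕ) (hr : 2 ≤ r) (F : ℕ → ℝ) (hF : FSpec r F)
    (k' m : ℕ)
    (hpow : 4 < 2 ^ m) (hub : k' ≤ 2 ^ m) (hlb : 2 ^ m < 2 * k')
    (ι : Type) [Fintype ι] (kZ : ι → ℕ)
    (hkZ1 : ∀ x, 1 ≤ kZ x) (hkZ2 : ∀ x, kZ x ≤ k')
    (hclass : ∀ i ∈ Finset.Icc 1 (m + 1),
      Nat.card {x : ι // ((2 : ℝ) ^ m) / 2 ^ i < (kZ x : ℝ) ∧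
        (kZ x : ℝ) ≤ ((2 : ℝ) ^ m) / 2 ^ (i - 1)} ≤ 2 ^ (3 * i + 3))
    (g : ι → ℕ) (hg : ∀ x, (g x : ℝ) ≤ F (kZ x))
    (N : ℕ) (hN : 128 * F k' < (N : ℝ)) :
    (∑ x : ι, (g x : ℝ)) < (N : ℝ) := by
  classical
  have hm : 3 ≤ m := by
    by_contra! h
    interval_cases m <;> omega
  have hclog : ∀ x, Nat.clog 2 (kZ x) ≤ m :=
    fun x ↦ Nat.clog_le_of_le_pow ((hkZ2 x).trans hub)
  have hC := two_pow_nineteen_le_growthFactor hr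
  have hcard :
      ∀ i ∈ Icc 1 (m + 1), (#{x | sizeClass m (kZ x) = i} : ℝ) ≤ 2 ^ (3 * i + 3) := by
    intro i hi
    have h := hclass i hi
    rw [Nat.card_eq_fintype_card, Fintype.card_subtype] at h
    refine (Nat.cast_le.mpr ((card_le_card fun x ↦ ?_).trans h)).trans_eq (by norm_num)
    simp only [mem_filter, mem_univ, true_and]
    rintro rfl
    exact bounds_of_sizeClass (hkZ1 x) (hclog x)
  calc ∑ x, (g x : ℝ)
      ≤ ∑ i ∈ Icc 1 (m + 1), 2 ^ (3 * i + 3) * growthFactor r ^ (m - 1 - i) :=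
        sum_le_sum_card_fiber_mul _ _ (fun x ↦ sizeClass_mem_Icc (hclog x)) _ _ _
          (fun x ↦ (hg x).trans_eq (hF.eq_growthFactor_pow_sizeClass (hclog x)))
          (fun _ _ ↦ pow_nonneg (by linarith) _) hcard
    _ < 2 ^ 7 * growthFactor r ^ (m - 2) := sum_two_pow_mul_pow_lt hC hm
    _ = 128 * F k' := by rw [hF.eq_growthFactor_pow_clog, clog_eq_of_le_of_lt hub hlb]; norm_num
    _ < N := hN

/-- Let `k'' = 2^m > 4` be the smallest power of two with `k' ≤ k''`,
where `k' ≤ ⌈k/2⌉`, and let a set `S'` with `|out(S')| = k'` and `|S'| > 128·F(k')` be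
partitioned into clusters indexed by `ι`, where the number of clusters of size-class `i`
(those with `k''/2^i < |out(Z)| ≤ k''/2^{i-1}`) is at most `2^{3i+3}`. If each cluster
`Z` is replaced by at most `F(|out(Z)|)` vertices, then the total number of resulting
vertices is strictly less than `|S'|`. -/
theorem stmt15 (r : ℕ) (hr : 2 ≤ r) (F : ℕ → ℝ) (hF : FSpec r F)
    (k k' m : ℕ) (hk' : k' ≤ (k + 1) / 2)
    (hpow : 4 < 2 ^ m) (hub : k' ≤ 2 ^ m) (hlb : 2 ^ m < 2 * k')
    (ι : Type) [Fintype ι] (kZ : ι → ℕ)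
    (hkZ1 : ∀ x, 1 ≤ kZ x) (hkZ2 : ∀ x, kZ x ≤ k')
    (hclass : ∀ i ∈ Finset.Icc 1 (m + 1),
      Nat.card {x : ι // ((2 : ℝ) ^ m) / 2 ^ i < (kZ x : ℝ) ∧
        (kZ x : ℝ) ≤ ((2 : ℝ) ^ m) / 2 ^ (i - 1)} ≤ 2 ^ (3 * i + 3))
    (g : ι → ℕ) (hg : ∀ x, (g x : ℝ) ≤ F (kZ x))
    (N : ℕ) (hN : 128 * F k' < (N : ℝ)) :
    (∑ x : ι, (g x : ℝ)) < (N : ℝ) :=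
  stmt15_general r hr F hF k' m hpow hub hlb ι kZ hkZ1 hkZ2 hclass g hg N hN

end VS
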